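/- arXiv:1504.01007 — 2 statements merged into one kernel-verified Lean document; each statement's English description precedes it below -/
import Mathlib

section
/- The following identity of homogeneous polynomials holds: ∏_{1≤i<j≤k}(x_j - x_i) · (x_1+...+x_k)^n = ∑_{n_1+...+n_k = n + k(k-1)/2} (n!/∏ n_i!) · ∏_{i<j}(n_j - n_i) · ∏_{i=1}^k x_i^{n_i}, where the sum is over k-tuples of nonnegative integers. -/
open MvPolynomial Finset
open scoped Nat

/-! Write the Vandermonde product as the determinant `∑_σ sgn σ ∏ xᵢ^σ(i)`. By the multinomial
theorem the coefficient of `x^d` in `x^a (x₁+⋯+x_k)^n` is `n!/∏ dᵢ! · ∏ dᵢ(dᵢ-1)⋯(dᵢ-aᵢ+1)`,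
which vanishes automatically unless `a ≤ d`. Summing over `σ` with signs, the coefficient of `x^d`
is `n!/∏ dᵢ!` times the determinant of the falling factorials `dᵢ(dᵢ-1)⋯(dᵢ-j+1)`; since these are
monic polynomials of degree `j` in `dᵢ`, that determinant is again the Vandermonde `∏_{i<j}(d_j-d_i)`. -/

section Vandermonde

variable {R : Type*} [CommRing R] {k : ℕ}

lemma prod_filter_lt_eq_prod_prod_Ioi {M : Type*} [CommMonoid M] (f : Fin k → Fin k → M) :
    ∏ p ∈ univ.filter (fun p : Fin k × Fin k => p.1 < p.2), f p.1 p.2 =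
      ∏ i, ∏ j ∈ Ioi i, f i j := by
  rw [prod_sigma']
  exact prod_nbij' (fun p => ⟨p.1, p.2⟩) (fun x => (x.1, x.2))
    (by simp) (by simp) (by simp) (by simp) (by simp)

lemma prod_filter_lt_sub_eq_det_vandermonde (v : Fin k → R) :
    ∏ p ∈ univ.filter (fun p : Fin k × Fin k => p.1 < p.2), (v p.2 - v p.1) =
      (Matrix.vandermonde v).det := by
  rw [Matrix.det_vandermonde, prod_filter_lt_eq_prod_prod_Ioi (fun i j => v j - v i)]

lemma prod_filter_lt_sub_eq_sum_perm (v : Fin k → R) :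
    ∏ p ∈ univ.filter (fun p : Fin k × Fin k => p.1 < p.2), (v p.2 - v p.1) =
      ∑ σ : Equiv.Perm (Fin k), (Equiv.Perm.sign σ : R) * ∏ i, v i ^ (σ i : ℕ) := by
  rw [prod_filter_lt_sub_eq_det_vandermonde, ← Matrix.det_transpose, Matrix.det_apply']
  rfl

lemma sum_perm_sign_mul_prod_descFactorial [IsDomain R] (d : Fin k → ℕ) :
    ∑ σ : Equiv.Perm (Fin k), (Equiv.Perm.sign σ : R) * ∏ i, ((d i).descFactorial (σ i) : R) =
      ∏ p ∈ univ.filter (fun p : Fin k × Fin k => p.1 < p.2), ((d p.2 : R) - d p.1) := by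
  refine Eq.trans ?_ (prod_filter_lt_sub_eq_det_vandermonde fun i => (d i : R)).symm
  rw [Matrix.det_eval_matrixOfPolynomials_eq_det_vandermonde _ (fun j => descPochhammer R j)
      (fun j => descPochhammer_natDegree R j) (fun j => monic_descPochhammer R j),
    ← Matrix.det_transpose, Matrix.det_apply']
  simp [descPochhammer_eval_eq_descFactorial]

end Vandermonde

lemma sum_perm_apply_val {k : ℕ} (σ : Equiv.Perm (Fin k)) :
    ∑ i, (σ i : ℕ) = k * (k - 1) / 2 := by
  rw [Equiv.sum_comp σ (fun i : Fin k => (i : ℕ)), Fin.sum_univ_eq_sum_range (fun i => i) k,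
    sum_range_id]

lemma Nat.multinomial_mul_prod_factorial_add {ι : Type*} (s : Finset ι) (a c : ι → ℕ) :
    multinomial s c * ∏ i ∈ s, (a i + c i)! =
      (∑ i ∈ s, c i)! * ∏ i ∈ s, (a i + c i).descFactorial (a i) := by
  refine Nat.eq_of_mul_eq_mul_left (prod_pos fun i (_ : i ∈ s) => (c i).factorial_pos) ?_
  rw [← mul_assoc, multinomial_spec, mul_left_comm, ← prod_mul_distrib]
  congr 2 with i
  simpa using (factorial_mul_descFactorial (Nat.le_add_right (a i) (c i))).symm

lemma filter_piFinset_range_sum_eq_piAntidiag {ι : Type*} [Fintype ι] [DecidableEq ι] (N : ℕ) :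
    (Fintype.piFinset fun _ : ι => range (N + 1)).filter (fun c => ∑ i, c i = N) =
      piAntidiag univ N := by
  ext c
  simp only [mem_filter, Fintype.mem_piFinset, mem_range, mem_piAntidiag, mem_univ,
    implies_true, and_true, and_iff_right_iff_imp]
  rintro rfl i
  exact Nat.lt_succ_of_le (single_le_sum (fun j _ => Nat.zero_le (c j)) (mem_univ i))

section ShiftedMultinomial

variable {K : Type*} [Field K] [CharZero K] {ι : Type*} [Fintype ι] [DecidableEq ι]

theorem prod_X_pow_mul_sum_X_pow (a : ι → ℕ) (n N : ℕ) (hN : ∑ i, a i + n = N) :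
    (∏ i, (X i : MvPolynomial ι K) ^ a i) * (∑ i, X i) ^ n =
      ∑ d ∈ piAntidiag univ N,
        C ((n ! : K) / (∏ i, ((d i)! : K)) * ∏ i, ((d i).descFactorial (a i) : K)) *
          ∏ i, X i ^ d i := by
  rw [sum_pow_eq_sum_piAntidiag, mul_sum]
  refine sum_of_injOn (a + ·) (fun c _ c' _ h => add_left_cancel h) ?maps ?zero ?eq
  case maps =>
    intro c hc
    simp_all [sum_add_distrib]
  case zero =>
    intro d hd hdim
    replace hd : ∑ i, d i = N := by simpa using hd
    obtain ⟨i, hi⟩ : ∃ i, d i < a i := by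
      by_contra! hle
      refine hdim ⟨d - a, ?_, funext fun i => Nat.add_sub_cancel' (hle i)⟩
      have := sum_tsub_distrib univ fun i _ => hle i
      have := sum_le_sum fun i (_ : i ∈ univ) => hle i
      simp only [mem_coe, mem_piAntidiag, mem_univ, implies_true, and_true, Pi.sub_apply]
      omega
    rw [prod_eq_zero (f := fun i => ((d i).descFactorial (a i) : K)) (mem_univ i)
      (by simp [Nat.descFactorial_eq_zero_iff_lt.2 hi]), mul_zero, C_0, zero_mul]
  case eq =>
    intro c hc
    rw [mem_piAntidiag] at hc
    have hmult : (Nat.multinomial univ c : K) =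
        (n ! : K) / (∏ i, ((a i + c i)! : K)) * ∏ i, ((a i + c i).descFactorial (a i) : K) := by
      have hfact : ∏ i, ((a i + c i)! : K) ≠ 0 :=
        prod_ne_zero_iff.2 fun i _ => Nat.cast_ne_zero.2 (Nat.factorial_ne_zero _)
      rw [div_mul_eq_mul_div, eq_div_iff hfact, ← hc.1]
      exact_mod_cast Nat.multinomial_mul_prod_factorial_add univ a c
    simp only [Pi.add_apply, pow_add, prod_mul_distrib, ← hmult,
      ← map_natCast (C : K →+* MvPolynomial ι K)]
    ring

end ShiftedMultinomial

theorem stmt_6_general (k n : ℕ) :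
    (∏ p ∈ Finset.univ.filter (fun p : Fin k × Fin k => p.1 < p.2), (X p.2 - X p.1)) *
        (∑ i : Fin k, X i) ^ n =
      ∑ c ∈ (Fintype.piFinset fun _ : Fin k => Finset.range (n + k * (k - 1) / 2 + 1)).filter
          (fun c => ∑ i, c i = n + k * (k - 1) / 2),
        C ((n.factorial : ℚ) / (∏ i, ((c i).factorial : ℚ)) *
            ∏ p ∈ Finset.univ.filter (fun p : Fin k × Fin k => p.1 < p.2),
              ((c p.2 : ℚ) - (c p.1 : ℚ))) *
          ∏ i, (X i : MvPolynomial (Fin k) ℚ) ^ c i := by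
  rw [filter_piFinset_range_sum_eq_piAntidiag, prod_filter_lt_sub_eq_sum_perm, sum_mul]
  calc ∑ σ : Equiv.Perm (Fin k), (Equiv.Perm.sign σ : MvPolynomial (Fin k) ℚ) *
        (∏ i, X i ^ (σ i : ℕ)) * (∑ i, X i) ^ n
      = ∑ σ : Equiv.Perm (Fin k), C (Equiv.Perm.sign σ : ℚ) *
          ∑ d ∈ piAntidiag univ (n + k * (k - 1) / 2),
            C ((n ! : ℚ) / (∏ i, ((d i)! : ℚ)) * ∏ i, ((d i).descFactorial (σ i) : ℚ)) *
              ∏ i, X i ^ d i := by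
        refine sum_congr rfl fun σ _ => ?_
        rw [mul_assoc, prod_X_pow_mul_sum_X_pow _ _ _ (by rw [sum_perm_apply_val, add_comm]),
          map_intCast]
    _ = _ := by
        simp_rw [mul_sum, ← mul_assoc, ← C_mul]
        rw [sum_comm]
        refine sum_congr rfl fun d _ => ?_
        rw [← sum_mul, ← map_sum, ← sum_perm_sign_mul_prod_descFactorial, mul_sum]
        congr 2
        exact sum_congr rfl fun σ _ => by ring

/-- `∏_{i<j}(x_j - x_i) · (x₁+⋯+x_k)^n
  = ∑_{n₁+⋯+n_k = n + k(k-1)/2} (n!/∏ nᵢ!) ∏_{i<j}(n_j-n_i) ∏ᵢ xᵢ^{nᵢ}`. -/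
theorem stmt_6 (k n : ℕ) (hk : 0 < k) :
    (∏ p ∈ Finset.univ.filter (fun p : Fin k × Fin k => p.1 < p.2), (X p.2 - X p.1)) *
        (∑ i : Fin k, X i) ^ n =
      ∑ c ∈ (Fintype.piFinset fun _ : Fin k => Finset.range (n + k * (k - 1) / 2 + 1)).filter
          (fun c => ∑ i, c i = n + k * (k - 1) / 2),
        C ((n.factorial : ℚ) / (∏ i, ((c i).factorial : ℚ)) *
            ∏ p ∈ Finset.univ.filter (fun p : Fin k × Fin k => p.1 < p.2),
              ((c p.2 : ℚ) - (c p.1 : ℚ))) *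
          ∏ i, (X i : MvPolynomial (Fin k) ℚ) ^ c i :=
  stmt_6_general k n
end

section
/- Let 0 ≤ n_1 < n_2 < ... < n_k be strictly increasing nonnegative integers with ∑ n_i = n + k(k-1)/2. In the graph whose vertices are strictly increasing k-tuples of nonnegative integers and whose edges increase one coordinate by 1 (preserving strict monotonicity), the number of directed paths from (0,1,...,k-1) to (n_1,...,n_k) equals (n!/∏ n_i!) · ∏_{i<j}(n_j - n_i). -/
/-!
Sorting the paths into `c` by their last step gives `N(c) = ∑ᵢ N(c - eᵢ)`, the sum running over
the `i` for which `c - eᵢ` is still a vertex of `Y_k`. The claimed formula, with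
`Δ(c) = ∏_{i<j} (c_j - c_i) = det V(c)` the Vandermonde determinant, obeys the same recurrence:
a summand with `c - eᵢ` outside `Y_k` has `cᵢ = 0` or a repeated coordinate in `c - eᵢ`, so it
vanishes, and the remaining identity `∑ᵢ cᵢ Δ(c - eᵢ) = (∑ cᵢ - k(k-1)/2) Δ(c)` comes from writing
`Δ` in the falling-factorial basis `(x)_m`, where `x (x - 1)_m = (x)_m (x - m)`: lowering `cᵢ`
rescales row `i` entrywise, and the sum over `i` of these row changes is computed with Cramer's
rule. At the starting vertex both sides are `1`, since `Δ(0, 1, …, k-1) = ∏ i!`.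
-/

open Finset

/-- A directed path of length `n` from `v` to `u` in the restricted Young graph `Y_k`:
vertices are strictly increasing `k`-tuples of nonnegative integers, each step
increases exactly one coordinate by `1`. -/
def YoungPath (k n : ℕ) (v u : Fin k → ℕ) : Type :=
  { f : Fin (n + 1) → (Fin k → ℕ) //
      f 0 = v ∧ f (Fin.last n) = u ∧ (∀ j, StrictMono (f j)) ∧
      ∀ j : Fin n, ∃ i : Fin k,
        f j.succ = Function.update (f j.castSucc) i (f j.castSucc i + 1) }

theorem prod_filter_fst_lt_snd {α M : Type*} [Fintype α] [LinearOrder α]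
    [LocallyFiniteOrderTop α] [CommMonoid M] (f : α → α → M) :
    ∏ p ∈ univ.filter (fun p : α × α => p.1 < p.2), f p.1 p.2 = ∏ i, ∏ j ∈ Ioi i, f i j := by
  rw [prod_filter, Fintype.prod_prod_type]
  refine prod_congr rfl fun i _ => ?_
  rw [← prod_filter]
  congr 1
  ext j
  simp

namespace Matrix

variable {n R : Type*} [Fintype n] [DecidableEq n] [CommRing R]

theorem sum_det_updateRow_sub_mul (A : Matrix n n R) (e d : n → R) :
    ∑ i, (A.updateRow i fun m => (e i - d m) * A i m).det = (∑ i, e i - ∑ m, d m) * A.det := by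
  have hcramer : ∀ i, (A.updateRow i fun m => (e i - d m) * A i m).det =
      e i * ∑ m, A i m * A.adjugate m i - ∑ m, d m * (A.adjugate m i * A i m) := by
    intro i
    rw [← cramer_transpose_apply, cramer_eq_adjugate_mulVec, mulVec, dotProduct, mul_sum,
      ← sum_sub_distrib]
    exact sum_congr rfl fun m _ => by rw [← adjugate_transpose, transpose_apply]; ring
  have hA : ∀ i, ∑ m, A i m * A.adjugate m i = A.det := fun i => by
    simpa [mul_apply] using congrFun (congrFun (mul_adjugate A) i) i
  have hA' : ∀ m, ∑ i, A.adjugate m i * A i m = A.det := fun m => by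
    simpa [mul_apply] using congrFun (congrFun (adjugate_mul A) m) m
  simp only [hcramer, hA, sum_sub_distrib]
  rw [sum_comm, ← sum_mul]
  simp only [← mul_sum, hA', ← sum_mul, sub_mul]

end Matrix

section Vandermonde

variable {R : Type*} [CommRing R] {k : ℕ}

theorem mul_descPochhammer_eval_sub_one (y : R) (m : ℕ) :
    y * (descPochhammer R m).eval (y - 1) = (descPochhammer R m).eval y * (y - m) := by
  rw [← descPochhammer_succ_eval, descPochhammer_succ_left, Polynomial.eval_mul,
    Polynomial.eval_comp]
  simp

theorem det_vandermonde_id_eq_prod_factorial :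
    (Matrix.vandermonde fun i : Fin k => (i : R)).det = ∏ i : Fin k, ((i : ℕ).factorial : R) := by
  cases k with
  | zero => simp
  | succ k =>
    rw [Matrix.det_vandermonde_id_eq_superFactorial, ← Nat.prod_range_succ_factorial,
      Nat.cast_prod, Fin.prod_univ_eq_prod_range (fun i => (i.factorial : R))]

variable [IsDomain R]

theorem det_vandermonde_eq_det_descPochhammer (x : Fin k → R) :
    (Matrix.vandermonde x).det =
      (Matrix.of fun j m : Fin k => (descPochhammer R m).eval (x j)).det :=
  Matrix.det_eval_matrixOfPolynomials_eq_det_vandermonde x _ (descPochhammer_natDegree R ·)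
    (monic_descPochhammer R ·)

theorem sum_mul_det_vandermonde_update_sub_one (x : Fin k → R) :
    ∑ i, x i * (Matrix.vandermonde (Function.update x i (x i - 1))).det =
      (∑ i, x i - ∑ i : Fin k, (i : R)) * (Matrix.vandermonde x).det := by
  set A := Matrix.of fun j m : Fin k => (descPochhammer R m).eval (x j)
  have hrow : ∀ i, x i * (Matrix.vandermonde (Function.update x i (x i - 1))).det =
      (A.updateRow i fun m => (x i - m) * A i m).det := by
    intro i
    have hlower : (Matrix.of fun j m : Fin k =>
          (descPochhammer R m).eval (Function.update x i (x i - 1) j)) =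
        A.updateRow i fun m => (descPochhammer R m).eval (x i - 1) := by
      ext j m
      rcases eq_or_ne j i with rfl | hj <;> simp [A, Matrix.updateRow_apply, *]
    rw [det_vandermonde_eq_det_descPochhammer, hlower, ← Matrix.det_updateRow_smul]
    congr 2
    ext m
    simp [A, mul_descPochhammer_eval_sub_one, mul_comm]
  rw [sum_congr rfl fun i _ => hrow i, Matrix.sum_det_updateRow_sub_mul,
    det_vandermonde_eq_det_descPochhammer]

end Vandermonde

section LowerAt
variable {k : ℕ}

def lowerAt (c : Fin k → ℕ) (i : Fin k) : Fin k → ℕ := Function.update c i (c i - 1)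

def corners (c : Fin k → ℕ) : Finset (Fin k) :=
  univ.filter fun i => 0 < c i ∧ StrictMono (lowerAt c i)

variable {c w : Fin k → ℕ} {i : Fin k}

theorem update_lowerAt (hi : 0 < c i) :
    Function.update (lowerAt c i) i (lowerAt c i i + 1) = c := by
  ext a
  rcases eq_or_ne a i with rfl | h
  · simp [lowerAt]; omega
  · simp [lowerAt, h]

theorem lowerAt_update_add_one : lowerAt (Function.update w i (w i + 1)) i = w := by
  ext a
  rcases eq_or_ne a i with rfl | h <;> simp [lowerAt, *]

theorem eq_of_lowerAt_eq (hi : 0 < c i) {i' : Fin k} (h : lowerAt c i = lowerAt c i') :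
    i = i' := by
  by_contra hne
  have := congrFun h i
  simp [lowerAt, Function.update_of_ne hne] at this
  omega

theorem monotone_lowerAt (hc : StrictMono c) : Monotone (lowerAt c i) := by
  intro p q hpq
  rcases hpq.lt_or_eq with hpq | rfl
  · have := hc hpq
    simp only [lowerAt, Function.update_apply]
    split_ifs <;> subst_vars <;> omega
  · rfl

theorem sum_lowerAt_add_one (hi : 0 < c i) : ∑ j, lowerAt c i j + 1 = ∑ j, c j := by
  rw [lowerAt, sum_update_of_mem (mem_univ i), ← sum_erase_add univ c (mem_univ i),
    sdiff_singleton_eq_erase]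
  omega

theorem mul_prod_factorial_lowerAt (hi : 0 < c i) :
    c i * ∏ j, (lowerAt c i j).factorial = ∏ j, (c j).factorial := by
  rw [← mul_prod_erase univ _ (mem_univ i),
    ← mul_prod_erase univ (fun j => (c j).factorial) (mem_univ i),
    prod_congr rfl fun j hj => by rw [lowerAt, Function.update_of_ne (ne_of_mem_erase hj)],
    lowerAt, Function.update_self, ← mul_assoc, Nat.mul_factorial_pred hi.ne']

theorem cast_lowerAt {R : Type*} [Ring R] (hi : 0 < c i) :
    (fun j => (lowerAt c i j : R)) = Function.update (fun j => (c j : R)) i (c i - 1) := by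
  ext j
  rcases eq_or_ne j i with rfl | h
  · simp [lowerAt, Nat.cast_sub (Nat.one_le_iff_ne_zero.mpr hi.ne')]
  · simp [lowerAt, h]

end LowerAt

namespace YoungPath
variable {k n : ℕ} {v u : Fin k → ℕ}

theorem monotone (f : YoungPath k n v u) : Monotone f.1 := by
  rw [Fin.monotone_iff_le_succ]
  intro j a
  obtain ⟨i, hi⟩ := f.2.2.2.2 j
  rw [hi]
  rcases eq_or_ne a i with rfl | h <;> simp [*]

theorem le_target (f : YoungPath k n v u) (j : Fin (n + 1)) : f.1 j ≤ u := by
  simpa [f.2.2.1] using f.monotone (Fin.le_last j)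

instance : Finite (YoungPath k n v u) :=
  Finite.of_injective
    (fun f (j : Fin (n + 1)) (a : Fin k) =>
      (⟨f.1 j a, Nat.lt_succ_of_le (f.le_target j a)⟩ : Fin (u a + 1)))
    fun _ _ h => Subtype.ext <| funext fun j => funext fun a =>
      congrArg Fin.val (congrFun (congrFun h j) a)

theorem card_zero_self (hv : StrictMono v) : Nat.card (YoungPath k 0 v v) = 1 := by
  refine Nat.card_eq_one_iff_unique.mpr
    ⟨⟨fun f g => Subtype.ext ?_⟩, ⟨⟨fun _ => v, rfl, rfl, fun _ => hv, Fin.elim0⟩⟩⟩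
  funext j
  rw [show j = 0 from Fin.ext (Nat.lt_one_iff.mp j.2), f.2.1, g.2.1]

def snoc (hu : StrictMono u) (p : Σ i : corners u, YoungPath k n v (lowerAt u i)) :
    YoungPath k (n + 1) v u :=
  ⟨Fin.snoc p.2.1 u, by simpa using p.2.2.1, by simp,
    Fin.lastCases (by simpa using hu) (fun j => by simpa using p.2.2.2.2.1 j),
    Fin.lastCases ⟨p.1, by
      have hi := (mem_filter.mp p.1.2).2.1
      simpa [p.2.2.2.1] using (update_lowerAt hi).symm⟩
      fun j => by
        rw [Fin.succ_castSucc, Fin.snoc_castSucc, Fin.snoc_castSucc]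
        exact p.2.2.2.2.2 j⟩

theorem snoc_injective (hu : StrictMono u) : Function.Injective (snoc (n := n) (v := v) hu) := by
  rintro ⟨⟨i, hi⟩, g⟩ ⟨⟨i', hi'⟩, g'⟩ h
  have hg : g.1 = g'.1 := funext fun j => by
    simpa [snoc] using congrFun (congrArg Subtype.val h) j.castSucc
  obtain rfl : i = i' :=
    eq_of_lowerAt_eq (mem_filter.mp hi).2.1 (by rw [← g.2.2.1, ← g'.2.2.1, hg])
  obtain rfl : g = g' := Subtype.ext hg
  rfl

theorem snoc_surjective (hu : StrictMono u) : Function.Surjective (snoc (n := n) (v := v) hu) := by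
  rintro ⟨f, h0, hlast, hsm, hstep⟩
  obtain ⟨i, hi⟩ := hstep (Fin.last n)
  rw [Fin.succ_last, hlast] at hi
  have hlower : lowerAt u i = f (Fin.last n).castSucc := by rw [hi, lowerAt_update_add_one]
  have hmem : i ∈ corners u := mem_filter.mpr ⟨mem_univ i, by rw [hi]; simp, hlower ▸ hsm _⟩
  refine ⟨⟨⟨i, hmem⟩, ⟨fun j => f j.castSucc, h0, hlower.symm, fun j => hsm _,
    fun j => by simpa [← Fin.succ_castSucc] using hstep j.castSucc⟩⟩, Subtype.ext ?_⟩
  funext j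
  refine Fin.lastCases ?_ (fun j => ?_) j <;> simp [snoc, hlast]

theorem card_succ (hu : StrictMono u) :
    Nat.card (YoungPath k (n + 1) v u) =
      ∑ i ∈ corners u, Nat.card (YoungPath k n v (lowerAt u i)) := by
  rw [← Nat.card_congr (Equiv.ofBijective _ ⟨snoc_injective hu, snoc_surjective hu⟩),
    Nat.card_sigma, sum_coe_sort (corners u) fun i => Nat.card (YoungPath k n v (lowerAt u i))]

end YoungPath

section Formula
variable {k : ℕ} {c : Fin k → ℕ}

theorem val_le_of_strictMono (hc : StrictMono c) (i : Fin k) : (i : ℕ) ≤ c i := by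
  simpa using card_le_card_of_injOn c (s := Iio i) (t := range (c i))
    (fun j hj => by simpa using hc (mem_Iio.mp hj)) hc.injective.injOn

theorem eq_val_of_strictMono_of_sum_eq (hc : StrictMono c)
    (hsum : ∑ i, c i = ∑ i : Fin k, (i : ℕ)) :
    c = fun i : Fin k => (i : ℕ) :=
  funext fun i => ((sum_eq_sum_iff_of_le fun j _ => val_le_of_strictMono hc j).mp hsum.symm i
    (mem_univ i)).symm

theorem mul_det_vandermonde_update_eq_zero {R : Type*} [CommRing R] [IsDomain R] [CharZero R]
    {i : Fin k} (hc : StrictMono c) (hi : i ∉ corners c) :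
    (c i : R) * (Matrix.vandermonde (Function.update (fun j => (c j : R)) i (c i - 1))).det =
      0 := by
  rcases Nat.eq_zero_or_pos (c i) with h0 | hpos
  · simp [h0]
  have hnot : ¬ Function.Injective (lowerAt c i) := fun hinj =>
    hi (mem_filter.mpr ⟨mem_univ i, hpos, (monotone_lowerAt hc).strictMono_of_injective hinj⟩)
  have hdet : (Matrix.vandermonde fun j => (lowerAt c i j : R)).det = 0 :=
    not_ne_iff.mp <|
      mt Matrix.det_vandermonde_ne_zero_iff.mp fun h => hnot (h.of_comp (f := Nat.cast))
  rw [← cast_lowerAt hpos, hdet, mul_zero]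

theorem card_youngPath_eq (n : ℕ) (hc : StrictMono c)
    (hsum : ∑ i, c i = n + ∑ i : Fin k, (i : ℕ)) :
    (Nat.card (YoungPath k n (fun i => i) c) : ℚ) =
      n.factorial / (∏ i, ((c i).factorial : ℚ)) * (Matrix.vandermonde fun i => (c i : ℚ)).det := by
  induction n generalizing c with
  | zero =>
    obtain rfl := eq_val_of_strictMono_of_sum_eq hc (by simpa using hsum)
    rw [YoungPath.card_zero_self hc, det_vandermonde_id_eq_prod_factorial]
    have : ∏ i : Fin k, ((i : ℕ).factorial : ℚ) ≠ 0 := by positivity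
    simp [this]
  | succ n ih =>
    set x : Fin k → ℚ := fun j => (c j : ℚ)
    have hterm : ∀ i ∈ corners c, (Nat.card (YoungPath k n (fun i => i) (lowerAt c i)) : ℚ) =
        n.factorial / (∏ j, ((c j).factorial : ℚ)) *
          (x i * (Matrix.vandermonde (Function.update x i (x i - 1))).det) := by
      intro i hi
      obtain ⟨-, hpos, hmono⟩ := mem_filter.mp hi
      have hfact :
          (c i : ℚ) * ∏ j, ((lowerAt c i j).factorial : ℚ) = ∏ j, ((c j).factorial : ℚ) := by
        exact_mod_cast mul_prod_factorial_lowerAt hpos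
      rw [ih hmono (by have := sum_lowerAt_add_one hpos; omega), cast_lowerAt hpos, ← hfact]
      have : (c i : ℚ) ≠ 0 := by positivity
      simp only [x]
      field_simp
    have hsumQ : ∑ i, x i - ∑ i : Fin k, (i : ℚ) = n + 1 := by
      have := congrArg (Nat.cast (R := ℚ)) hsum
      push_cast at this
      simp only [x, this]
      ring
    calc (Nat.card (YoungPath k (n + 1) (fun i => i) c) : ℚ)
        = ∑ i ∈ corners c, n.factorial / (∏ j, ((c j).factorial : ℚ)) *
            (x i * (Matrix.vandermonde (Function.update x i (x i - 1))).det) := by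
          rw [YoungPath.card_succ hc, Nat.cast_sum]
          exact sum_congr rfl hterm
      _ = ∑ i, n.factorial / (∏ j, ((c j).factorial : ℚ)) *
            (x i * (Matrix.vandermonde (Function.update x i (x i - 1))).det) :=
          sum_subset (subset_univ _) fun i _ hi => by
            rw [mul_det_vandermonde_update_eq_zero hc hi, mul_zero]
      _ = _ := by
          rw [← mul_sum, sum_mul_det_vandermonde_update_sub_one, hsumQ, Nat.factorial_succ]
          push_cast
          ring

end Formula

theorem stmt_8_general (k n : ℕ) (c : Fin k → ℕ) (hmono : StrictMono c)
    (hsum : ∑ i, c i = n + k * (k - 1) / 2) :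
    (Nat.card (YoungPath k n (fun i => (i : ℕ)) c) : ℚ) =
      (n.factorial : ℚ) / (∏ i, ((c i).factorial : ℚ)) *
        ∏ p ∈ Finset.univ.filter (fun p : Fin k × Fin k => p.1 < p.2),
          ((c p.2 : ℚ) - (c p.1 : ℚ)) := by
  have hsum' : ∑ i, c i = n + ∑ i : Fin k, (i : ℕ) := by
    rw [hsum, Fin.sum_univ_eq_sum_range (fun i => i) k, sum_range_id]
  rw [card_youngPath_eq n hmono hsum', Matrix.det_vandermonde,
    prod_filter_fst_lt_snd fun a b => (c b : ℚ) - c a]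

/-- The number of paths in the restricted Young graph from `(0,1,…,k-1)` to a strictly
increasing tuple `(n₁,…,n_k)` with `∑ nᵢ = n + k(k-1)/2` is `(n!/∏ nᵢ!) ∏_{i<j}(n_j-n_i)`. -/
theorem stmt_8 (k n : ℕ) (hk : 0 < k) (c : Fin k → ℕ) (hmono : StrictMono c)
    (hsum : ∑ i, c i = n + k * (k - 1) / 2) :
    (Nat.card (YoungPath k n (fun i => (i : ℕ)) c) : ℚ) =
      (n.factorial : ℚ) / (∏ i, ((c i).factorial : ℚ)) *
        ∏ p ∈ Finset.univ.filter (fun p : Fin k × Fin k => p.1 < p.2),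
          ((c p.2 : ℚ) - (c p.1 : ℚ)) :=
  stmt_8_general k n c hmono hsum
end
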